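/- For the predator-prey system S' = λ(t) - μS - f̄(S,P)P, P' = γ f̄(S,P)P - δ₁P - δ₂P², with f̄ nondecreasing in S, nonincreasing in P, λ(t) ∈ [Λℓ, Λu] ⊂ (0,∞), and nonnegative solutions: if γ f̄(Θ̂^u/γ, 0) < δ₁, where Θ̂^u = γΛu/min{μ, δ₁}, then P(t) → 0 as t → ∞ for every nonnegative initial condition. -/

import Mathlib

open Real Filter Topology Set

/-!
Since `S' ≤ Λu - μ S`, comparison with the linear equation gives `S(t) ≤ B` for large `t`,
for any `B > Λu / μ`, in particular for any `B > Θ̂ᵘ / γ = Λu / min μ δ₁`. By continuity the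
threshold `γ f̄(B, 0) < δ₁` persists for some such `B`, and monotonicity of `f̄` then gives
`P' ≤ -(δ₁ - γ f̄(B, 0)) P` eventually, so `P` decays exponentially by Grönwall.
-/

lemma le_mul_exp_of_hasDerivAt_le_neg_mul {f f' : ℝ → ℝ} {c T : ℝ}
    (hf : ∀ t, T ≤ t → HasDerivAt f (f' t) t) (hle : ∀ t, T ≤ t → f' t ≤ -c * f t)
    {t : ℝ} (ht : T ≤ t) : f t ≤ f T * exp (-c * (t - T)) := by
  rw [← gronwallBound_ε0]
  refine le_gronwallBound_of_liminf_deriv_right_le (f' := f') ?_ ?_ le_rfl ?_ t ⟨ht, le_rfl⟩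
  · exact fun x hx => (hf x hx.1).continuousAt.continuousWithinAt
  · exact fun x hx r hr => (hf x hx.1).hasDerivWithinAt.liminf_right_slope_le hr
  · exact fun x hx => by simpa using hle x hx.1

lemma tendsto_mul_exp_neg_mul_sub {c : ℝ} (hc : 0 < c) (C T : ℝ) :
    Tendsto (fun t => C * exp (-c * (t - T))) atTop (𝓝 0) := by
  have h : Tendsto (fun t => -c * (t - T)) atTop atBot :=
    (tendsto_atTop_add_const_right _ _ tendsto_id).const_mul_atTop_of_neg (neg_neg_of_pos hc)
  simpa using (tendsto_exp_atBot.comp h).const_mul C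

lemma eventually_le_of_hasDerivAt_le_sub_mul {f f' : ℝ → ℝ} {a μ T : ℝ} (hμ : 0 < μ)
    (hf : ∀ t, T ≤ t → HasDerivAt f (f' t) t) (hle : ∀ t, T ≤ t → f' t ≤ a - μ * f t)
    {B : ℝ} (hB : a / μ < B) : ∀ᶠ t in atTop, f t ≤ B := by
  have hdecay : ∀ t, T ≤ t → f t - a / μ ≤ (f T - a / μ) * exp (-μ * (t - T)) :=
    fun t ht => le_mul_exp_of_hasDerivAt_le_neg_mul (fun s hs => (hf s hs).sub_const _)
      (fun s hs => by linarith [hle s hs, mul_div_cancel₀ a hμ.ne']) ht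
  filter_upwards [(tendsto_mul_exp_neg_mul_sub hμ (f T - a / μ) T).eventually_lt_const
    (sub_pos.2 hB), eventually_ge_atTop T] with t hsmall ht
  linarith [hdecay t ht]

lemma tendsto_zero_of_nonneg_of_hasDerivAt_le_neg_mul {f f' : ℝ → ℝ} {c T : ℝ} (hc : 0 < c)
    (hf : ∀ t, T ≤ t → HasDerivAt f (f' t) t) (hle : ∀ t, T ≤ t → f' t ≤ -c * f t)
    (hnonneg : ∀ᶠ t in atTop, 0 ≤ f t) : Tendsto f atTop (𝓝 0) :=
  tendsto_of_tendsto_of_tendsto_of_le_of_le' tendsto_const_nhds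
    (tendsto_mul_exp_neg_mul_sub hc (f T) T) hnonneg
    ((eventually_ge_atTop T).mono fun _ ht => le_mul_exp_of_hasDerivAt_le_neg_mul hf hle ht)

theorem stmt18_general (μ γ δ₁ δ₂ Λℓ Λu : ℝ) (l : ℝ → ℝ) (fb : ℝ → ℝ → ℝ) (S P : ℝ → ℝ)
    (hμ : 0 < μ) (hγ : 0 < γ) (hδ₁ : 0 < δ₁) (hδ₂ : 0 < δ₂)
    (hΛℓ : 0 < Λℓ) (hΛ : Λℓ ≤ Λu)
    (hlb : ∀ t, Λℓ ≤ l t ∧ l t ≤ Λu)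
    (hfb_cont : Continuous (fun p : ℝ × ℝ => fb p.1 p.2))
    (hfb_nonneg : ∀ x z, 0 ≤ x → 0 ≤ z → 0 ≤ fb x z)
    (hfbS : ∀ z, MonotoneOn (fun x => fb x z) (Set.Ici 0))
    (hfbP : ∀ x, AntitoneOn (fun z => fb x z) (Set.Ici 0))
    (hpos : ∀ t, 0 ≤ t → 0 ≤ S t ∧ 0 ≤ P t)
    (hS : ∀ t, 0 ≤ t → HasDerivAt S (l t - μ * S t - fb (S t) (P t) * P t) t)
    (hP : ∀ t, 0 ≤ t → HasDerivAt P
      (γ * fb (S t) (P t) * P t - δ₁ * P t - δ₂ * (P t) ^ 2) t)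
    (hthr : γ * fb (γ * Λu / min μ δ₁ / γ) 0 < δ₁) :
    Tendsto P atTop (nhds 0) := by
  set M := Λu / min μ δ₁
  have hM : Λu / μ ≤ M :=
    div_le_div_of_nonneg_left (hΛℓ.trans_le hΛ).le (lt_min hμ hδ₁) (min_le_left _ _)
  rw [mul_div_assoc, mul_div_cancel_left₀ _ hγ.ne'] at hthr
  obtain ⟨B, hMB, hB⟩ : ∃ B, M < B ∧ γ * fb B 0 < δ₁ := by
    have hcont : Continuous fun x => γ * fb x 0 :=
      continuous_const.mul (hfb_cont.comp (continuous_id.prodMk continuous_const))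
    have hnear : ∀ᶠ x in 𝓝[>] M, γ * fb x 0 < δ₁ :=
      nhdsWithin_le_nhds ((hcont.tendsto M).eventually_lt_const hthr)
    exact ((eventually_mem_nhdsWithin (a := M)).and hnear).exists
  have hSB : ∀ᶠ t in atTop, S t ≤ B :=
    eventually_le_of_hasDerivAt_le_sub_mul hμ hS
      (fun t ht => by
        have := mul_nonneg (hfb_nonneg _ _ (hpos t ht).1 (hpos t ht).2) (hpos t ht).2
        linarith [(hlb t).2])
      (hM.trans_lt hMB)
  obtain ⟨T, hT⟩ := (hSB.and (eventually_ge_atTop 0)).exists_forall_of_atTop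
  refine tendsto_zero_of_nonneg_of_hasDerivAt_le_neg_mul (sub_pos.2 hB)
    (fun t ht => hP t (hT t ht).2) (fun t ht => ?_)
    ((eventually_ge_atTop 0).mono fun t ht => (hpos t ht).2)
  obtain ⟨hSt, hPt⟩ := hpos t (hT t ht).2
  have hfb : fb (S t) (P t) ≤ fb B 0 :=
    (hfbP (S t) self_mem_Ici hPt hPt).trans
      (hfbS 0 hSt (hSt.trans (hT t ht).1) (hT t ht).1)
  nlinarith [mul_le_mul_of_nonneg_right hfb hPt, mul_nonneg hδ₂.le (sq_nonneg (P t))]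

theorem stmt18 (μ γ δ₁ δ₂ Λℓ Λu : ℝ) (l : ℝ → ℝ) (fb : ℝ → ℝ → ℝ) (S P : ℝ → ℝ)
    (hμ : 0 < μ) (hγ : 0 < γ) (hδ₁ : 0 < δ₁) (hδ₂ : 0 < δ₂)
    (hΛℓ : 0 < Λℓ) (hΛ : Λℓ ≤ Λu)
    (hl : Continuous l) (hlb : ∀ t, Λℓ ≤ l t ∧ l t ≤ Λu)
    (hfb_cont : Continuous (fun p : ℝ × ℝ => fb p.1 p.2))
    (hfb_nonneg : ∀ x z, 0 ≤ x → 0 ≤ z → 0 ≤ fb x z)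
    (hfbS : ∀ z, MonotoneOn (fun x => fb x z) (Set.Ici 0))
    (hfbP : ∀ x, AntitoneOn (fun z => fb x z) (Set.Ici 0))
    (hpos : ∀ t, 0 ≤ t → 0 ≤ S t ∧ 0 ≤ P t)
    (hS : ∀ t, 0 ≤ t → HasDerivAt S (l t - μ * S t - fb (S t) (P t) * P t) t)
    (hP : ∀ t, 0 ≤ t → HasDerivAt P
      (γ * fb (S t) (P t) * P t - δ₁ * P t - δ₂ * (P t) ^ 2) t)
    (hthr : γ * fb (γ * Λu / min μ δ₁ / γ) 0 < δ₁) :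
    Tendsto P atTop (nhds 0) :=
  stmt18_general μ γ δ₁ δ₂ Λℓ Λu l fb S P hμ hγ hδ₁ hδ₂ hΛℓ hΛ hlb hfb_cont hfb_nonneg hfbS hfbP
    hpos hS hP hthr
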